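/- Let d be an odd prime, ε = 2π/d, and q, q', m, m' ∈ ℤ/d with q, q' nonzero and q ≠ q'. Define χ^{(q)}_{m,j} = -(qε/2)j² + (mε + qπ)j. For each j let j̃ satisfy j̃q' ≡ jq (mod d). Then |∑_{j=0}^{d-1} exp(i(χ^{(q)}_{m,j} - χ^{(q')}_{m',j̃}))|² = d. -/

import Mathlib

/-!
Since `d` is odd, `j (d - j)` is even, and `χ^{(q)}_{m,j} = (2π/d) (q · j (d - j)/2 + m j)`; so
`exp (i χ^{(q)}_{m,j}) = ψ (-q j²/2 + m j)` for the standard additive character `ψ` of `ℤ/d`.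
With `j̃ = j q / q'` the summand becomes `ψ (A j² + B j)` where `A = q (q - q') / (2 q') ≠ 0`.
For `S = ∑ₓ ψ (f x)` with `f x = A x² + B x`, substituting `x = t + y` in
`|S|² = ∑ₓ ∑ᵧ ψ (f x - f y)` leaves `∑ₜ ψ (f t) ∑ᵧ ψ (2 A t y)`, and the inner character sum
vanishes unless `t = 0`; hence `|S|² = d`.
-/

open Real

/-- The phase function of the quantum-walk eigenvectors:
`χ^{(q)}_{m,j} = -(qε/2) j² + (mε + qπ) j` with `ε = 2π/d`. -/
noncomputable def qwChi (d q m : ℕ) (j : ℕ) : ℝ :=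
  -((q : ℝ) * (2 * Real.pi / d) / 2) * (j : ℝ) ^ 2 +
    ((m : ℝ) * (2 * Real.pi / d) + (q : ℝ) * Real.pi) * (j : ℝ)

open Complex Finset

namespace AddChar

variable {R : Type*} [CommRing R] [Fintype R] (ψ : AddChar R ℂ)

lemma norm_sum_sq_eq_sum_sum_sub (f : R → R) :
    (‖∑ x, ψ (f x)‖ ^ 2 : ℂ) = ∑ t, ∑ y, ψ (f (t + y) - f y) := by
  rw [← mul_conj', map_sum, sum_mul_sum, sum_comm]
  conv_rhs => rw [sum_comm]
  refine sum_congr rfl fun y _ => (Fintype.sum_equiv (Equiv.addRight y) _ _ fun t => ?_).symm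
  rw [map_sub_eq_div, div_eq_mul_inv, ← map_neg_eq_inv, map_neg_eq_conj, Equiv.coe_addRight]

lemma norm_sum_quadratic_sq (hψ : ψ.IsPrimitive) {a : R} (ha : IsUnit (2 * a)) (b : R) :
    ‖∑ x, ψ (a * x ^ 2 + b * x)‖ ^ 2 = Fintype.card R := by
  classical
  have hdiff (t y : R) : a * (t + y) ^ 2 + b * (t + y) - (a * y ^ 2 + b * y)
      = (a * t ^ 2 + b * t) + y * (2 * a * t) := by ring
  have h := norm_sum_sq_eq_sum_sum_sub ψ (fun x => a * x ^ 2 + b * x)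
  simp only [hdiff, map_add_eq_mul ψ (a * _ ^ 2 + b * _), ← mul_sum, sum_mulShift _ hψ,
    ha.mul_right_eq_zero] at h
  exact_mod_cast h.trans (by simp [mul_ite] : _ = (Fintype.card R : ℂ))

end AddChar

lemma ZMod.two_mul_inv_two {d : ℕ} (hodd : Odd d) : (2 : ZMod d) * 2⁻¹ = 1 := by
  exact_mod_cast ZMod.coe_mul_inv_eq_one 2 (Nat.coprime_two_left.2 hodd)

lemma ZMod.natCast_ne_natCast {n a b : ℕ} (ha : a < n) (hb : b < n) (hab : a ≠ b) :
    (a : ZMod n) ≠ b := by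
  rwa [Ne, ZMod.natCast_eq_natCast_iff', Nat.mod_eq_of_lt ha, Nat.mod_eq_of_lt hb]

lemma ZMod.sum_range_natCast {M : Type*} [AddCommMonoid M] (d : ℕ) [NeZero d]
    (f : ZMod d → M) : ∑ j ∈ range d, f j = ∑ x, f x :=
  sum_nbij' (↑) ZMod.val (fun _ _ => mem_univ _) (fun x _ => mem_range.2 x.val_lt)
    (fun _ hn => ZMod.val_cast_of_lt (mem_range.1 hn)) (fun x _ => ZMod.natCast_zmod_val x)
    (fun _ _ => rfl)

lemma exp_I_mul_qwChi {d : ℕ} [NeZero d] (hodd : Odd d) (q m j : ℕ) :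
    exp (I * qwChi d q m j) =
      ZMod.stdAddChar (N := d) (q * (-j ^ 2 * 2⁻¹) + m * j) := by
  obtain ⟨k, hk⟩ : Even ((j : ℤ) * (d - j)) := by
    rcases Int.even_or_odd (j : ℤ) with hj | hj
    · exact hj.mul_right _
    · exact ((hodd.natCast (R := ℤ)).sub_odd hj).mul_left _
  have hchi : qwChi d q m j = 2 * π * ((q * k + m * j : ℤ) : ℝ) / d := by
    have hk' : (j : ℝ) * (d - j) = k + k := by exact_mod_cast hk
    have hd0 : (d : ℝ) ≠ 0 := NeZero.ne _
    rw [qwChi]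
    push_cast
    field_simp
    linear_combination (q : ℝ) * hk'
  have hkmod : (k : ZMod d) = -(j : ZMod d) ^ 2 * 2⁻¹ := by
    have hk' := congrArg (Int.cast : ℤ → ZMod d) hk
    push_cast at hk'
    rw [ZMod.natCast_self, zero_sub] at hk'
    linear_combination (-(2 : ZMod d)⁻¹) * hk' - k * ZMod.two_mul_inv_two hodd
  rw [hchi, ← hkmod]
  convert (ZMod.stdAddChar_coe (N := d) (q * k + m * j)).symm using 2
  · push_cast; ring
  · push_cast; ring

lemma exp_I_mul_qwChi_sub {d : ℕ} [Fact d.Prime] (hodd : Odd d) {q q' j j' : ℕ} (m m' : ℕ)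
    (hq' : (q' : ZMod d) ≠ 0) (hj : (j' : ZMod d) * q' = (j : ZMod d) * q) :
    exp (I * (qwChi d q m j - qwChi d q' m' j')) =
      ZMod.stdAddChar (N := d)
        (2⁻¹ * q * (q - q') * (q' : ZMod d)⁻¹ * j ^ 2 + (m - m' * q * (q' : ZMod d)⁻¹) * j) := by
  rw [mul_sub, Complex.exp_sub, exp_I_mul_qwChi hodd, exp_I_mul_qwChi hodd,
    ← AddChar.map_sub_eq_div, (eq_mul_inv_iff_mul_eq₀ hq').2 hj]
  congr 1
  field_simp
  ring

theorem phase_gauss_sum_abs_sq_general (d : ℕ) (hd : d.Prime) (hodd : Odd d)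
    (q q' m m' : ℕ) (hq : q < d) (hq' : q' < d)
    (hq0 : q ≠ 0) (hq'0 : q' ≠ 0) (hne : q ≠ q')
    (tj : ℕ → ℕ) (hcong : ∀ j, (tj j * q') % d = (j * q) % d) :
    ‖∑ j ∈ Finset.range d,
        Complex.exp (Complex.I * ((qwChi d q m j : ℝ) - qwChi d q' m' (tj j)))‖ ^ 2
      = d := by
  have : Fact d.Prime := ⟨hd⟩
  have hqz : (q : ZMod d) ≠ 0 := by simpa using ZMod.natCast_ne_natCast hq hd.pos hq0
  have hq'z : (q' : ZMod d) ≠ 0 := by simpa using ZMod.natCast_ne_natCast hq' hd.pos hq'0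
  have hqq' : (q : ZMod d) - q' ≠ 0 := sub_ne_zero.2 (ZMod.natCast_ne_natCast hq hq' hne)
  have h2 : (2 : ZMod d) ≠ 0 := left_ne_zero_of_mul_eq_one (ZMod.two_mul_inv_two hodd)
  set A : ZMod d := 2⁻¹ * q * (q - q') * (q' : ZMod d)⁻¹
  set B : ZMod d := m - m' * q * (q' : ZMod d)⁻¹
  have hA : IsUnit (2 * A) := by simp [A, h2, hqz, hq'z, hqq']
  have hterm (j : ℕ) : exp (I * ((qwChi d q m j : ℝ) - qwChi d q' m' (tj j))) =
      ZMod.stdAddChar (N := d) (A * j ^ 2 + B * j) := by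
    refine exp_I_mul_qwChi_sub hodd m m' hq'z ?_
    exact_mod_cast (ZMod.natCast_eq_natCast_iff' _ _ _).2 (hcong j)
  calc _ = ‖∑ x : ZMod d, ZMod.stdAddChar (A * x ^ 2 + B * x)‖ ^ 2 := by
        rw [sum_congr rfl fun j _ => hterm j]
        exact congrArg (‖·‖ ^ 2)
          (ZMod.sum_range_natCast d fun x => ZMod.stdAddChar (A * x ^ 2 + B * x))
    _ = d := by
        rw [AddChar.norm_sum_quadratic_sq _ (ZMod.isPrimitive_stdAddChar d) hA, ZMod.card]

theorem phase_gauss_sum_abs_sq (d : ℕ) (hd : d.Prime) (hodd : Odd d)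
    (q q' m m' : ℕ) (hq : q < d) (hq' : q' < d) (hm : m < d) (hm' : m' < d)
    (hq0 : q ≠ 0) (hq'0 : q' ≠ 0) (hne : q ≠ q')
    (tj : ℕ → ℕ) (htj : ∀ j, tj j < d) (hcong : ∀ j, (tj j * q') % d = (j * q) % d) :
    ‖∑ j ∈ Finset.range d,
        Complex.exp (Complex.I * ((qwChi d q m j : ℝ) - qwChi d q' m' (tj j)))‖ ^ 2
      = d :=
  phase_gauss_sum_abs_sq_general d hd hodd q q' m m' hq hq' hq0 hq'0 hne tj hcong
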